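/- arXiv:2105.00879 — 5 statements merged into one kernel-verified Lean document; each statement's English description precedes it below -/
import Mathlib

section
/- Let T ≥ 1 be an integer and v_1,…,v_T, a ∈ ℝ. Set u := Λ(a+v_T) and ρ_s := e^{v_s−v_T} − 1 for s = 1,…,T−1. Then for every t ∈ {0,1,…,T}: ∑_{k=t}^T binom(T−t, k−t) · e^{k(v_T+a)} / ∏_{s=1}^T (1+e^{v_s+a}) = u^t / ∏_{s=1}^{T−1} (1+u ρ_s). (Here binom denotes the binomial coefficient.) -/
/-!
Write `E = e^{v_T + a}`, so that `u = Λ(a + v_T) = E / (1 + E)`. By the binomial theorem the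
numerator collapses to `E^t (1 + E)^{T-t}`, and each factor `1 + u ρ_s` equals
`(1 + e^{v_s + a}) / (1 + E)`; the identity is then a rearrangement of powers of `1 + E`.
-/

open Finset

/-- The logistic function `Λ(x) = 1/(1+e^{-x})`. -/
noncomputable def logistic (x : ℝ) : ℝ := 1 / (1 + Real.exp (-x))

theorem sum_Icc_choose_mul_pow {R : Type*} [CommSemiring R] (x : R) {t m : ℕ} (htm : t ≤ m) :
    ∑ k ∈ Icc t m, ((m - t).choose (k - t) : R) * x ^ k = x ^ t * (1 + x) ^ (m - t) := by
  obtain ⟨j, rfl⟩ := Nat.exists_eq_add_of_le htm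
  rw [← Ico_add_one_right_eq_Icc, sum_Ico_eq_sum_range, add_comm 1 x, add_pow, mul_sum]
  simp only [show t + j + 1 - t = j + 1 by omega, Nat.add_sub_cancel_left, pow_add]
  exact sum_congr rfl fun i _ => by ring

theorem logistic_eq_exp_div (x : ℝ) : logistic x = Real.exp x / (1 + Real.exp x) := by
  rw [logistic, Real.exp_neg]
  field_simp
  ring

theorem one_add_logistic_mul_exp_sub_one (c y : ℝ) :
    1 + logistic c * (Real.exp y - 1) = (1 + Real.exp (c + y)) / (1 + Real.exp c) := by
  rw [logistic_eq_exp_div, Real.exp_add]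
  field_simp
  ring

/-- With `T = n + 1 ≥ 1` periods, `u = Λ(a + v_T)` and `ρ_s = e^{v_s - v_T} - 1` for
`s = 1, …, T-1`, one has, for every `t ∈ {0, …, T}`:
`∑_{k=t}^T C(T-t, k-t) e^{k(v_T+a)} / ∏_{s=1}^T (1+e^{v_s+a}) = u^t / ∏_{s=1}^{T-1} (1+u ρ_s)`. -/
theorem c_t_as_moment (n : ℕ) (v : Fin (n + 1) → ℝ) (a : ℝ) (t : ℕ) (ht : t ≤ n + 1) :
    (∑ k ∈ Finset.Icc t (n + 1),
        (Nat.choose (n + 1 - t) (k - t) : ℝ) * Real.exp (k * (v (Fin.last n) + a))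
          / ∏ s, (1 + Real.exp (v s + a)))
      = (logistic (a + v (Fin.last n))) ^ t
        / ∏ s : Fin n,
            (1 + logistic (a + v (Fin.last n))
              * (Real.exp (v s.castSucc - v (Fin.last n)) - 1)) := by
  rw [Fin.prod_univ_castSucc]
  set E := Real.exp (v (Fin.last n) + a)
  set P := ∏ s : Fin n, (1 + Real.exp (v s.castSucc + a))
  have hE : 1 + E ≠ 0 := by positivity
  have hP : P ≠ 0 := prod_ne_zero_iff.mpr fun s _ => by positivity
  have hu : logistic (a + v (Fin.last n)) = E / (1 + E) := by
    rw [logistic_eq_exp_div, add_comm]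
  have hnum : ∑ k ∈ Icc t (n + 1), ((n + 1 - t).choose (k - t) : ℝ) *
      Real.exp (k * (v (Fin.last n) + a)) = E ^ t * (1 + E) ^ (n + 1 - t) := by
    simpa only [Real.exp_nat_mul] using sum_Icc_choose_mul_pow E ht
  have hden : ∏ s : Fin n, (1 + logistic (a + v (Fin.last n)) *
      (Real.exp (v s.castSucc - v (Fin.last n)) - 1)) = P / (1 + E) ^ n := by
    simp only [one_add_logistic_mul_exp_sub_one, prod_div_distrib, prod_const, card_univ,
      Fintype.card_fin, P, E]
    ring_nf
  have hsplit : (1 + E) ^ (n + 1 - t) * (1 + E) ^ t = (1 + E) ^ n * (1 + E) := by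
    rw [← pow_add, Nat.sub_add_cancel ht, pow_succ]
  rw [← sum_div, hnum, hden, hu, div_pow]
  field_simp
  linear_combination E ^ t * hsplit
end

section
/- Let T ≥ 1 and m = (m_0,…,m_T) ∈ M_T with H̲_T(m) · H̄_T(m) = 0. Then there is exactly one Borel probability measure on [0,1] whose first T+1 raw moments equal m (i.e. D(m) is a singleton); in particular q̲_T(m) = q̄_T(m). -/
open MeasureTheory

/-- `μ` is a Borel probability measure on `[0,1]` (viewed as a measure on `ℝ` giving no mass
to the complement of `[0,1]`) whose first `T+1` raw moments are `m_0, …, m_T`. -/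
def IsMomentSeq (T : ℕ) (μ : Measure ℝ) (m : Fin (T + 1) → ℝ) : Prop :=
  IsProbabilityMeasure μ ∧ μ (Set.Icc (0 : ℝ) 1)ᶜ = 0 ∧
    ∀ t : Fin (T + 1), m t = ∫ u, u ^ (t : ℕ) ∂μ

/-- The moment space `M_T ⊆ ℝ^{T+1}`: vectors of the first `T+1` raw moments of Borel
probability measures on `[0,1]`. -/
def momSpace (T : ℕ) : Set (Fin (T + 1) → ℝ) :=
  {m | ∃ μ : Measure ℝ, IsMomentSeq T μ m}

/-- `D(m)`: the set of Borel probability measures on `[0,1]` with raw moments `m_0, …, m_T`. -/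
def Dset (T : ℕ) (m : Fin (T + 1) → ℝ) : Set (Measure ℝ) :=
  {μ | IsMomentSeq T μ m}

/-- `q̲_T(m) = inf_{μ ∈ D(m)} ∫ u^{T+1} dμ(u)`. -/
noncomputable def qlow (T : ℕ) (m : Fin (T + 1) → ℝ) : ℝ :=
  sInf ((fun μ : Measure ℝ => ∫ u, u ^ (T + 1) ∂μ) '' Dset T m)

/-- `q̄_T(m) = sup_{μ ∈ D(m)} ∫ u^{T+1} dμ(u)`. -/
noncomputable def qup (T : ℕ) (m : Fin (T + 1) → ℝ) : ℝ :=
  sSup ((fun μ : Measure ℝ => ∫ u, u ^ (T + 1) ∂μ) '' Dset T m)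

/-- Extension of a finite vector to `ℕ → ℝ` (junk value `0` outside the range). -/
def toFun {n : ℕ} (m : Fin n → ℝ) : ℕ → ℝ :=
  fun k => if h : k < n then m ⟨k, h⟩ else 0

/-- The lower Hankel determinant `H̲_t(m)` (with `0`-based indexing of `m`):
for `t` even, `det[(m_{i+j})_{0 ≤ i,j ≤ t/2}]`; for `t` odd,
`det[(m_{i+j+1})_{0 ≤ i,j ≤ (t+1)/2 - 1}]`. -/
noncomputable def Hlow (t : ℕ) (m : ℕ → ℝ) : ℝ :=
  if t % 2 = 0 then
    Matrix.det (Matrix.of fun i j : Fin (t / 2 + 1) => m (i.val + j.val))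
  else
    Matrix.det (Matrix.of fun i j : Fin ((t + 1) / 2) => m (i.val + j.val + 1))

/-- The upper Hankel determinant `H̄_t(m)` (with `0`-based indexing of `m`):
for `t` even, `det[(m_{i+j+1} - m_{i+j+2})_{0 ≤ i,j ≤ t/2 - 1}]`; for `t` odd,
`det[(m_{i+j} - m_{i+j+1})_{0 ≤ i,j ≤ (t+1)/2 - 1}]`. -/
noncomputable def Hup (t : ℕ) (m : ℕ → ℝ) : ℝ :=
  if t % 2 = 0 then
    Matrix.det (Matrix.of fun i j : Fin (t / 2) => m (i.val + j.val + 1) - m (i.val + j.val + 2))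
  else
    Matrix.det (Matrix.of fun i j : Fin ((t + 1) / 2) => m (i.val + j.val) - m (i.val + j.val + 1))

open MeasureTheory Polynomial Matrix

/-! If a Hankel determinant vanishes, a nonzero kernel vector `c` of the corresponding localizing
matrix yields `f = w q²` with `q = ∑ cᵢ Xⁱ` and a weight `w ∈ {1, X, 1 - X, X - X²}` that is
nonnegative on `[0,1]`; `f` has degree at most `T` and `∫ f dμ = cᵀ M c = 0`. As `∫ f` only
depends on the moments, every measure in `D(m)` is concentrated on the at most `T` roots of `f`,
and the mass of each root is the integral of a Lagrange basis polynomial of degree `< T`, again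
a function of the moments. -/

theorem MeasureTheory.Measure.ext_of_measure_compl_finset_eq_zero {α : Type*}
    [MeasurableSpace α] [MeasurableSingletonClass α] {μ ν : Measure α} (s : Finset α)
    (hμ : μ (↑s)ᶜ = 0) (hν : ν (↑s)ᶜ = 0) (h : ∀ x ∈ s, μ {x} = ν {x}) : μ = ν := by
  classical
  have hfilter (A : Set α) : A ∩ ↑s = ↑(s.filter (· ∈ A)) := by ext; simp [and_comm]
  ext A -
  rw [← measure_inter_conull hμ, ← measure_inter_conull hν, hfilter,
    ← sum_measure_singleton, ← sum_measure_singleton]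
  exact Finset.sum_congr rfl fun x hx => h x (Finset.mem_filter.1 hx).1

theorem Lagrange.integral_eval_basis {μ : Measure ℝ} [IsFiniteMeasure μ] {s : Finset ℝ}
    (hμ : μ (↑s)ᶜ = 0) {x : ℝ} (hx : x ∈ s) :
    ∫ u, (Lagrange.basis s id x).eval u ∂μ = μ.real {x} := by
  have hae : (fun u => (Lagrange.basis s id x).eval u) =ᵐ[μ] Set.indicator {x} 1 := by
    refine measure_mono_null (fun u hu => ?_) hμ
    intro hus
    apply hu
    by_cases hux : u = x
    · subst hux
      simpa using Lagrange.eval_basis_self (Set.injOn_id (s : Set ℝ)) hx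
    · simpa [hux] using Lagrange.eval_basis_of_ne (v := id) (Ne.symm hux) hus
  rw [integral_congr_ae hae, integral_indicator_one (measurableSet_singleton x)]

theorem MeasureTheory.Measure.eq_of_integral_eval_eq {μ ν : Measure ℝ} [IsFiniteMeasure μ]
    [IsFiniteMeasure ν] (s : Finset ℝ) (hμ : μ (↑s)ᶜ = 0) (hν : ν (↑s)ᶜ = 0)
    (h : ∀ p : ℝ[X], p.natDegree < s.card → ∫ u, p.eval u ∂μ = ∫ u, p.eval u ∂ν) :
    μ = ν := by
  refine Measure.ext_of_measure_compl_finset_eq_zero s hμ hν fun x hx => ?_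
  have hdeg : (Lagrange.basis s id x).natDegree < s.card := by
    rw [Lagrange.natDegree_basis (Set.injOn_id _) hx]
    exact Nat.sub_lt (Finset.card_pos.2 ⟨x, hx⟩) one_pos
  have := h _ hdeg
  rw [Lagrange.integral_eval_basis hμ hx, Lagrange.integral_eval_basis hν hx] at this
  exact (measureReal_eq_measureReal_iff (measure_ne_top μ _) (measure_ne_top ν _)).1 this

theorem Polynomial.measure_compl_roots_eq_zero_of_integral_eval_eq_zero {μ : Measure ℝ} {f : ℝ[X]}
    (hf : f ≠ 0) (hnn : 0 ≤ᵐ[μ] fun u => f.eval u) (hint : Integrable (fun u => f.eval u) μ)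
    (hzero : ∫ u, f.eval u ∂μ = 0) : μ (↑f.roots.toFinset)ᶜ = 0 := by
  have hae : (fun u => f.eval u) =ᵐ[μ] 0 :=
    (integral_eq_zero_iff_of_nonneg_ae hnn hint).1 hzero
  refine measure_mono_null (fun u hu => ?_) hae
  simpa [hf] using hu

/-- The Hankel matrix of the moments of `w • μ`; `H̲_T` and `H̄_T` are its determinants for
`w = 1, X` and `w = X - X², 1 - X` respectively. -/
noncomputable def localizingMatrix (μ : Measure ℝ) (w : ℝ → ℝ) (n : ℕ) :
    Matrix (Fin n) (Fin n) ℝ :=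
  of fun i j => ∫ u, w u * u ^ (i + j : ℕ) ∂μ

theorem integral_mul_eval_sq_eq_sum {μ : Measure ℝ} {w : ℝ → ℝ}
    (hw : ∀ k : ℕ, Integrable (fun u => w u * u ^ k) μ) {n : ℕ} (c : Fin n → ℝ) :
    ∫ u, w u * (∑ i, c i * u ^ (i : ℕ)) ^ 2 ∂μ = c ⬝ᵥ localizingMatrix μ w n *ᵥ c := by
  have hexp (u : ℝ) : w u * (∑ i, c i * u ^ (i : ℕ)) ^ 2
      = ∑ i, c i * ∑ j : Fin n, w u * u ^ (i + j : ℕ) * c j := by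
    rw [sq, Finset.sum_mul_sum, Finset.mul_sum]
    refine Finset.sum_congr rfl fun i _ => ?_
    rw [Finset.mul_sum, Finset.mul_sum]
    exact Finset.sum_congr rfl fun j _ => by ring
  have hint (i : Fin n) : Integrable (fun u => ∑ j : Fin n, w u * u ^ (i + j : ℕ) * c j) μ :=
    integrable_finsetSum _ fun j _ => (hw _).mul_const _
  simp_rw [hexp, integral_finsetSum _ fun i _ => (hint i).const_mul _, integral_const_mul,
    integral_finsetSum _ fun j _ => (hw _).mul_const _, integral_mul_const]
  rfl

theorem exists_integral_mul_eval_sq_eq_zero {μ : Measure ℝ} {w : ℝ → ℝ}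
    (hw : ∀ k : ℕ, Integrable (fun u => w u * u ^ k) μ) {n : ℕ}
    (hdet : (localizingMatrix μ w n).det = 0) :
    ∃ q : ℝ[X], q ≠ 0 ∧ q.natDegree < n ∧ ∫ u, w u * q.eval u ^ 2 ∂μ = 0 := by
  obtain ⟨c, hc0, hc⟩ := exists_mulVec_eq_zero_iff.2 hdet
  set q := (degreeLTEquiv ℝ n).symm c with hq
  have hq0 : (q : ℝ[X]) ≠ 0 := fun h => hc0 <| by
    rw [← (degreeLTEquiv ℝ n).apply_symm_apply c, ← hq]
    exact (degreeLTEquiv_eq_zero_iff_eq_zero q.2).2 h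
  refine ⟨q, hq0, (natDegree_lt_iff_degree_lt hq0).2 (mem_degreeLT.1 q.2), ?_⟩
  have heval (u : ℝ) : (q : ℝ[X]).eval u = ∑ i, c i * u ^ (i : ℕ) := by
    rw [eval_eq_sum_degreeLTEquiv q.2, Subtype.coe_eta, hq, LinearEquiv.apply_symm_apply]
  simp_rw [heval, integral_mul_eval_sq_eq_sum hw, hc, dotProduct_zero]

namespace IsMomentSeq

variable {T : ℕ} {μ ν : Measure ℝ} {m : Fin (T + 1) → ℝ}

theorem ae_mem_Icc (h : IsMomentSeq T μ m) : ∀ᵐ u ∂μ, u ∈ Set.Icc (0 : ℝ) 1 :=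
  ae_iff.2 h.2.1

theorem integrable_eval (h : IsMomentSeq T μ m) (p : ℝ[X]) :
    Integrable (fun u => p.eval u) μ := by
  have := h.1
  rw [← Measure.restrict_eq_self_of_ae_mem h.ae_mem_Icc]
  exact p.continuous.continuousOn.integrableOn_compact isCompact_Icc

theorem integrable_eval_mul_pow (h : IsMomentSeq T μ m) (p : ℝ[X]) (k : ℕ) :
    Integrable (fun u => p.eval u * u ^ k) μ := by
  have := h.integrable_eval (p * X ^ k)
  simpa only [eval_mul, eval_pow, eval_X] using this

theorem integrable_pow (h : IsMomentSeq T μ m) (k : ℕ) : Integrable (fun u => u ^ k) μ := by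
  simpa using h.integrable_eval (X ^ k)

theorem integral_pow (h : IsMomentSeq T μ m) {k : ℕ} (hk : k ≤ T) :
    ∫ u, u ^ k ∂μ = toFun m k := by
  rw [toFun, dif_pos (Nat.lt_succ_of_le hk)]
  exact (h.2.2 ⟨k, _⟩).symm

theorem integral_eval_eq (hμ : IsMomentSeq T μ m) (hν : IsMomentSeq T ν m) {p : ℝ[X]}
    (hp : p.natDegree ≤ T) : ∫ u, p.eval u ∂μ = ∫ u, p.eval u ∂ν := by
  have hsum (ρ : Measure ℝ) (hρ : IsMomentSeq T ρ m) :
      ∫ u, p.eval u ∂ρ = ∑ t ∈ Finset.range (T + 1), p.coeff t * toFun m t := by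
    simp_rw [p.eval_eq_sum_range' (Nat.lt_succ_of_le hp)]
    rw [integral_finsetSum _ fun t _ => by
      simpa using hρ.integrable_eval_mul_pow (C (p.coeff t)) t]
    refine Finset.sum_congr rfl fun t ht => ?_
    rw [integral_const_mul, hρ.integral_pow (Nat.lt_succ_iff.1 (Finset.mem_range.1 ht))]
  rw [hsum μ hμ, hsum ν hν]

theorem exists_poly_of_det_localizingMatrix_eq_zero (h : IsMomentSeq T μ m) {w : ℝ[X]}
    (hw0 : w ≠ 0) (hwnn : ∀ u ∈ Set.Icc (0 : ℝ) 1, 0 ≤ w.eval u) {n : ℕ}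
    (hdeg : w.natDegree + 2 * n ≤ T + 2)
    (hdet : (localizingMatrix μ (fun u => w.eval u) n).det = 0) :
    ∃ f : ℝ[X], f ≠ 0 ∧ f.natDegree ≤ T ∧ (∀ u ∈ Set.Icc (0 : ℝ) 1, 0 ≤ f.eval u) ∧
      ∫ u, f.eval u ∂μ = 0 := by
  obtain ⟨q, hq0, hqdeg, hq⟩ :=
    exists_integral_mul_eval_sq_eq_zero (h.integrable_eval_mul_pow w) hdet
  refine ⟨w * q ^ 2, mul_ne_zero hw0 (pow_ne_zero 2 hq0), ?_, fun u hu => ?_, ?_⟩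
  · have := natDegree_mul_le (p := w) (q := q ^ 2)
    have := natDegree_pow_le (p := q) (n := 2)
    omega
  · simpa only [eval_mul, eval_pow] using mul_nonneg (hwnn u hu) (sq_nonneg (q.eval u))
  · simpa only [eval_mul, eval_pow] using hq

theorem Hlow_eq_det_localizingMatrix_of_even (h : IsMomentSeq T μ m) (hT : T % 2 = 0) :
    Hlow T (toFun m) = (localizingMatrix μ (fun _ => 1) (T / 2 + 1)).det := by
  rw [Hlow, if_pos hT]
  congr 1
  ext i j
  simp only [localizingMatrix, of_apply, one_mul]
  rw [h.integral_pow (by omega)]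

theorem Hlow_eq_det_localizingMatrix_of_odd (h : IsMomentSeq T μ m) (hT : T % 2 = 1) :
    Hlow T (toFun m) = (localizingMatrix μ (fun u => u) ((T + 1) / 2)).det := by
  rw [Hlow, if_neg (by omega)]
  congr 1
  ext i j
  simp only [localizingMatrix, of_apply, ← pow_succ']
  rw [h.integral_pow (by omega)]

theorem Hup_eq_det_localizingMatrix_of_even (h : IsMomentSeq T μ m) (hT : T % 2 = 0) :
    Hup T (toFun m) = (localizingMatrix μ (fun u => u - u ^ 2) (T / 2)).det := by
  rw [Hup, if_pos hT]
  congr 1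
  ext i j
  simp only [localizingMatrix, of_apply, sub_mul, ← pow_succ', ← pow_add]
  rw [integral_sub (h.integrable_pow _) (h.integrable_pow _), h.integral_pow (by omega),
    h.integral_pow (by omega), add_comm 2]

theorem Hup_eq_det_localizingMatrix_of_odd (h : IsMomentSeq T μ m) (hT : T % 2 = 1) :
    Hup T (toFun m) = (localizingMatrix μ (fun u => 1 - u) ((T + 1) / 2)).det := by
  rw [Hup, if_neg (by omega)]
  congr 1
  ext i j
  simp only [localizingMatrix, of_apply, sub_mul, one_mul, ← pow_succ']
  rw [integral_sub (h.integrable_pow _) (h.integrable_pow _), h.integral_pow (by omega),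
    h.integral_pow (by omega)]

theorem exists_poly_of_Hlow_mul_Hup_eq_zero (h : IsMomentSeq T μ m)
    (hzero : Hlow T (toFun m) * Hup T (toFun m) = 0) :
    ∃ f : ℝ[X], f ≠ 0 ∧ f.natDegree ≤ T ∧ (∀ u ∈ Set.Icc (0 : ℝ) 1, 0 ≤ f.eval u) ∧
      ∫ u, f.eval u ∂μ = 0 := by
  rcases Nat.mod_two_eq_zero_or_one T with hT | hT
  · rw [h.Hlow_eq_det_localizingMatrix_of_even hT, h.Hup_eq_det_localizingMatrix_of_even hT]
      at hzero
    rcases mul_eq_zero.1 hzero with hdet | hdet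
    · refine h.exists_poly_of_det_localizingMatrix_eq_zero (w := 1) (n := T / 2 + 1) one_ne_zero
        (by simp) (by simp; omega) (by simpa using hdet)
    · have hdeg : (X - X ^ 2 : ℝ[X]).natDegree ≤ 2 := by compute_degree
      refine h.exists_poly_of_det_localizingMatrix_eq_zero (w := X - X ^ 2) (n := T / 2)
        (fun h0 => absurd (congrArg (eval 2) h0) (by norm_num)) (fun u hu => ?_) (by omega)
        (by simpa using hdet)
      simpa using pow_le_of_le_one hu.1 hu.2 two_ne_zero
  · rw [h.Hlow_eq_det_localizingMatrix_of_odd hT, h.Hup_eq_det_localizingMatrix_of_odd hT]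
      at hzero
    rcases mul_eq_zero.1 hzero with hdet | hdet
    · refine h.exists_poly_of_det_localizingMatrix_eq_zero (w := X) (n := (T + 1) / 2)
        X_ne_zero (fun u hu => by simpa using hu.1) (by simp; omega) (by simpa using hdet)
    · have hdeg : (1 - X : ℝ[X]).natDegree ≤ 1 := by compute_degree
      refine h.exists_poly_of_det_localizingMatrix_eq_zero (w := 1 - X) (n := (T + 1) / 2)
        (fun h0 => by simpa using congrArg (eval 0) h0) (fun u hu => by simpa using hu.2)
        (by omega) (by simpa using hdet)

theorem eq_of_Hlow_mul_Hup_eq_zero (hμ : IsMomentSeq T μ m) (hν : IsMomentSeq T ν m)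
    (hzero : Hlow T (toFun m) * Hup T (toFun m) = 0) : μ = ν := by
  obtain ⟨f, hf0, hfdeg, hfnn, hfμ⟩ := hμ.exists_poly_of_Hlow_mul_Hup_eq_zero hzero
  have hfν : ∫ u, f.eval u ∂ν = 0 := (hν.integral_eval_eq hμ hfdeg).trans hfμ
  have hroots {ρ : Measure ℝ} (hρ : IsMomentSeq T ρ m) (hfρ : ∫ u, f.eval u ∂ρ = 0) :
      ρ (↑f.roots.toFinset)ᶜ = 0 :=
    measure_compl_roots_eq_zero_of_integral_eval_eq_zero hf0
      (hρ.ae_mem_Icc.mono fun u hu => hfnn u hu) (hρ.integrable_eval f) hfρ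
  have hcard : f.roots.toFinset.card ≤ T :=
    (Multiset.toFinset_card_le _).trans (f.card_roots'.trans hfdeg)
  have := hμ.1
  have := hν.1
  exact Measure.eq_of_integral_eval_eq _ (hroots hμ hfμ) (hroots hν hfν)
    fun p hp => hμ.integral_eval_eq hν (by omega)

end IsMomentSeq

theorem hankel_boundary_unique_general (T : ℕ) (m : Fin (T + 1) → ℝ)
    (hm : m ∈ momSpace T) (hzero : Hlow T (toFun m) * Hup T (toFun m) = 0) :
    (∃! μ : Measure ℝ, μ ∈ Dset T m) ∧ qlow T m = qup T m := by
  obtain ⟨μ, hμ⟩ := hm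
  have hunique : ∀ ν ∈ Dset T m, ν = μ := fun ν hν => hν.eq_of_Hlow_mul_Hup_eq_zero hμ hzero
  have hD : Dset T m = {μ} := Set.eq_singleton_iff_unique_mem.2 ⟨hμ, hunique⟩
  refine ⟨⟨μ, hμ, hunique⟩, ?_⟩
  rw [qlow, qup, hD, Set.image_singleton, csInf_singleton, csSup_singleton]

/-- Boundary case of the truncated Hausdorff moment problem: if `m ∈ M_T` and
`H̲_T(m) · H̄_T(m) = 0`, then there is exactly one Borel probability measure on `[0,1]`
with moments `m`, i.e. `D(m)` is a singleton; in particular `q̲_T(m) = q̄_T(m)`. -/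
theorem hankel_boundary_unique (T : ℕ) (hT : 1 ≤ T) (m : Fin (T + 1) → ℝ)
    (hm : m ∈ momSpace T) (hzero : Hlow T (toFun m) * Hup T (toFun m) = 0) :
    (∃! μ : Measure ℝ, μ ∈ Dset T m) ∧ qlow T m = qup T m :=
  hankel_boundary_unique_general T m hm hzero
end

section
/- Let T ≥ 1 and let μ and ν be Borel probability measures on [0,1] such that ∫ u^t dμ(u) = ∫ u^t dν(u) for every t = 0,1,…,T. Then |∫ u^{T+1} dμ(u) − ∫ u^{T+1} dν(u)| ≤ 1/4^T. Equivalently, for every m ∈ M_T, q̄_T(m) − q̲_T(m) ≤ 1/4^T. -/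
open MeasureTheory

section KSaux
open Polynomial

lemma cheb_aux (n : ℕ) : (Chebyshev.T ℝ n).natDegree ≤ n ∧
    (Chebyshev.T ℝ n).coeff n = if n = 0 then 1 else 2 ^ (n - 1) := by
  induction n using Nat.twoStepInduction with
  | zero => simp [Chebyshev.T_zero]
  | one => simp [Chebyshev.T_one]
  | more n ih1 ih2 =>
    have h : Chebyshev.T ℝ ((n:ℤ) + 2) = 2 * X * Chebyshev.T ℝ ((n:ℤ) + 1) - Chebyshev.T ℝ n :=
      Chebyshev.T_add_two ℝ n
    have hcast : ((n + 2 : ℕ) : ℤ) = (n : ℤ) + 2 := by push_cast; ring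
    have hcast1 : ((n + 1 : ℕ) : ℤ) = (n : ℤ) + 1 := by push_cast; ring
    rw [hcast, h, ← hcast1]
    constructor
    · refine (natDegree_sub_le _ _).trans (max_le ?_ ?_)
      · calc (2 * X * Chebyshev.T ℝ (n+1:ℕ)).natDegree
            ≤ (2 * X : ℝ[X]).natDegree + (Chebyshev.T ℝ (n+1:ℕ)).natDegree := natDegree_mul_le
          _ ≤ 1 + (n + 1) := by
              gcongr
              · calc (2 * X : ℝ[X]).natDegree ≤ (2:ℝ[X]).natDegree + X.natDegree := natDegree_mul_le
                  _ ≤ 1 := by simp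
              · exact ih2.1
          _ = n + 2 := by ring
      · exact ih1.1.trans (by omega)
    · have e1 : (2 * X * Chebyshev.T ℝ (n+1:ℕ)).coeff (n+2)
          = 2 * (Chebyshev.T ℝ (n+1:ℕ)).coeff (n+1) := by
        rw [mul_assoc, coeff_ofNat_mul, coeff_X_mul]
      have e2 : (Chebyshev.T ℝ (n:ℕ)).coeff (n+2) = 0 :=
        coeff_eq_zero_of_natDegree_lt (by omega)
      rw [coeff_sub, e1, e2, ih2.2]
      simp only [Nat.add_sub_cancel]
      norm_num
      ring

lemma cheb_bound (n : ℤ) (x : ℝ) (h1 : -1 ≤ x) (h2 : x ≤ 1) :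
    |(Chebyshev.T ℝ n).eval x| ≤ 1 := by
  have := Real.cos_arccos h1 h2
  rw [← this, Chebyshev.T_real_cos]
  exact Real.abs_cos_le_one _

lemma exists_poly (T : ℕ) : ∃ p : ℝ[X], p.natDegree ≤ T ∧
    ∀ u ∈ Set.Icc (0:ℝ) 1, |u ^ (T+1) - p.eval u| ≤ 1 / 2 ^ (2*T+1) := by
  set c : ℝ := (2 ^ (2*T+1))⁻¹ with hc
  set L : ℝ[X] := C 2 * X + C (-1) with hL
  set Q : ℝ[X] := (Chebyshev.T ℝ (T+1:ℕ)).comp L with hQ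
  have hTd : (Chebyshev.T ℝ (T+1:ℕ)).natDegree = T + 1 := by
    have h := cheb_aux (T+1)
    refine le_antisymm h.1 (le_natDegree_of_ne_zero ?_)
    rw [h.2]
    simp
  have hTl : (Chebyshev.T ℝ (T+1:ℕ)).leadingCoeff = 2 ^ T := by
    rw [leadingCoeff, hTd, (cheb_aux (T+1)).2]
    simp
  have hLd : L.natDegree = 1 := natDegree_linear (by norm_num)
  have hQd : Q.natDegree = T + 1 := by
    rw [hQ, natDegree_comp, hTd, hLd, mul_one]
  have hQl : Q.coeff (T+1) = 2 ^ (2*T+1) := by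
    have : Q.leadingCoeff = 2 ^ T * 2 ^ (T+1) := by
      rw [hQ, leadingCoeff_comp (by rw [hLd]; norm_num), hTl, hTd,
        leadingCoeff_linear (by norm_num : (2:ℝ) ≠ 0)]
    rw [← hQd, ← leadingCoeff, this, ← pow_add]
    ring_nf
  refine ⟨X ^ (T+1) - C c * Q, ?_, ?_⟩
  · rw [natDegree_le_iff_coeff_eq_zero]
    intro k hk
    rw [coeff_sub, coeff_X_pow, coeff_C_mul]
    rcases eq_or_lt_of_le (Nat.succ_le_of_lt hk) with h | h
    · rw [← h, hQl, hc]
      simp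
    · rw [if_neg (by omega), coeff_eq_zero_of_natDegree_lt (by omega)]
      simp
  · intro u hu
    have he : u ^ (T+1) - (X ^ (T+1) - C c * Q).eval u = c * Q.eval u := by
      simp [eval_pow]
    rw [he]
    have hQe : Q.eval u = (Chebyshev.T ℝ (T+1:ℕ)).eval (2*u - 1) := by
      rw [hQ, eval_comp, hL]
      push_cast
      norm_num
      ring_nf
    rw [abs_mul, hQe]
    have hb := cheb_bound (T+1:ℕ) (2*u - 1) (by linarith [hu.1]) (by linarith [hu.2])
    have hcpos : (0:ℝ) < c := by positivity
    calc |c| * |(Chebyshev.T ℝ (T+1:ℕ)).eval (2*u-1)| ≤ |c| * 1 := by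
          exact mul_le_mul_of_nonneg_left hb (abs_nonneg _)
      _ = 1 / 2 ^ (2*T+1) := by rw [abs_of_pos hcpos, mul_one, one_div]

open MeasureTheory

lemma ae_mem_Icc {μ : Measure ℝ} (h : μ (Set.Icc (0:ℝ) 1)ᶜ = 0) :
    ∀ᵐ u ∂μ, u ∈ Set.Icc (0:ℝ) 1 := by
  rw [ae_iff]
  simpa [Set.compl_def] using h

lemma integrable_pow' (μ : Measure ℝ) [IsProbabilityMeasure μ]
    (h : μ (Set.Icc (0:ℝ) 1)ᶜ = 0) (k : ℕ) : Integrable (fun u => u ^ k) μ := by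
  refine ⟨(measurable_id.pow_const k).aestronglyMeasurable, ?_⟩
  refine HasFiniteIntegral.of_bounded (C := 1) ?_
  filter_upwards [ae_mem_Icc h] with u hu
  rw [Real.norm_eq_abs, abs_pow]
  exact pow_le_one₀ (abs_nonneg u) (abs_le.2 ⟨by linarith [hu.1], hu.2⟩)

lemma integrable_poly (μ : Measure ℝ) [IsProbabilityMeasure μ]
    (h : μ (Set.Icc (0:ℝ) 1)ᶜ = 0) (p : ℝ[X]) : Integrable (fun u => p.eval u) μ := by
  have : (fun u => p.eval u) =
      fun u => ∑ i ∈ Finset.range (p.natDegree + 1), p.coeff i * u ^ i := by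
    funext u
    rw [eval_eq_sum_range]
  rw [this]
  exact integrable_finset_sum _ fun i _ => (integrable_pow' μ h i).const_mul _

lemma integral_poly (μ : Measure ℝ) [IsProbabilityMeasure μ]
    (h : μ (Set.Icc (0:ℝ) 1)ᶜ = 0) (p : ℝ[X]) (T : ℕ) (hp : p.natDegree ≤ T) :
    ∫ u, p.eval u ∂μ = ∑ i ∈ Finset.range (T + 1), p.coeff i * ∫ u, u ^ i ∂μ := by
  have : (fun u => p.eval u) =
      fun u => ∑ i ∈ Finset.range (T + 1), p.coeff i * u ^ i := by
    funext u
    rw [eval_eq_sum_range' (n := T+1) (by omega)]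
  rw [this, integral_finset_sum _ fun i _ => (integrable_pow' μ h i).const_mul _]
  exact Finset.sum_congr rfl fun i _ => integral_const_mul _ _

lemma key (T : ℕ) (μ ν : Measure ℝ) (hμ : IsProbabilityMeasure μ) (hν : IsProbabilityMeasure ν)
    (hμs : μ (Set.Icc (0 : ℝ) 1)ᶜ = 0) (hνs : ν (Set.Icc (0 : ℝ) 1)ᶜ = 0)
    (hmom : ∀ t : ℕ, t ≤ T → ∫ u, u ^ t ∂μ = ∫ u, u ^ t ∂ν) :
    |(∫ u, u ^ (T + 1) ∂μ) - ∫ u, u ^ (T + 1) ∂ν| ≤ 1 / 4 ^ T := by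
  obtain ⟨p, hpd, hpb⟩ := exists_poly T
  have hPeq : ∫ u, p.eval u ∂μ = ∫ u, p.eval u ∂ν := by
    rw [integral_poly μ hμs p T hpd, integral_poly ν hνs p T hpd]
    exact Finset.sum_congr rfl fun i hi => by
      rw [hmom i (by simpa using Nat.lt_succ_iff.1 (Finset.mem_range.1 hi))]
  set c : ℝ := 1 / 2 ^ (2*T+1) with hc
  have hbd : ∀ (ρ : Measure ℝ), IsProbabilityMeasure ρ → ρ (Set.Icc (0 : ℝ) 1)ᶜ = 0 →
      |(∫ u, u ^ (T + 1) ∂ρ) - ∫ u, p.eval u ∂ρ| ≤ c := by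
    intro ρ hρ hρs
    rw [← integral_sub (integrable_pow' ρ hρs (T+1)) (integrable_poly ρ hρs p)]
    rw [← Real.norm_eq_abs]
    calc ‖∫ u, (u ^ (T+1) - p.eval u) ∂ρ‖ ≤ c * (ρ Set.univ).toReal := by
          refine norm_integral_le_of_norm_le_const ?_
          filter_upwards [ae_mem_Icc hρs] with u hu
          rw [Real.norm_eq_abs]
          exact hpb u hu
      _ = c := by simp
  have h1 := hbd μ hμ hμs
  have h2 := hbd ν hν hνs
  have hcc : c + c = 1 / 4 ^ T := by
    rw [hc]
    rw [div_add_div _ _ (by positivity) (by positivity)]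
    rw [div_eq_div_iff (by positivity) (by positivity)]
    have : (4:ℝ) ^ T = 2 ^ (2*T) := by
      rw [pow_mul]; norm_num
    rw [this]
    ring
  calc |(∫ u, u ^ (T + 1) ∂μ) - ∫ u, u ^ (T + 1) ∂ν|
      = |((∫ u, u ^ (T + 1) ∂μ) - ∫ u, p.eval u ∂μ)
          - ((∫ u, u ^ (T + 1) ∂ν) - ∫ u, p.eval u ∂ν)| := by rw [hPeq]; congr 1; ring
    _ ≤ |(∫ u, u ^ (T + 1) ∂μ) - ∫ u, p.eval u ∂μ|
          + |(∫ u, u ^ (T + 1) ∂ν) - ∫ u, p.eval u ∂ν| := abs_sub _ _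
    _ ≤ c + c := add_le_add h1 h2
    _ = 1 / 4 ^ T := hcc

end KSaux


/-- Karlin–Shapley bound: two Borel probability measures on `[0,1]` sharing their first
`T+1` raw moments have `(T+1)`-th raw moments at distance at most `1/4^T`; equivalently,
`q̄_T(m) - q̲_T(m) ≤ 1/4^T` for every `m ∈ M_T`. -/
theorem moment_range_le (T : ℕ) (hT : 1 ≤ T) :
    (∀ μ ν : Measure ℝ, IsProbabilityMeasure μ → IsProbabilityMeasure ν →
      μ (Set.Icc (0 : ℝ) 1)ᶜ = 0 → ν (Set.Icc (0 : ℝ) 1)ᶜ = 0 →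
      (∀ t : ℕ, t ≤ T → ∫ u, u ^ t ∂μ = ∫ u, u ^ t ∂ν) →
      |(∫ u, u ^ (T + 1) ∂μ) - ∫ u, u ^ (T + 1) ∂ν| ≤ 1 / 4 ^ T) ∧
    ∀ m ∈ momSpace T, qup T m - qlow T m ≤ 1 / 4 ^ T := by
  constructor
  · exact fun μ ν hμ hν hμs hνs hmom => key T μ ν hμ hν hμs hνs hmom
  · intro m hm
    obtain ⟨μ0, hμ0⟩ := hm
    have hne : ((fun μ : Measure ℝ => ∫ u, u ^ (T + 1) ∂μ) '' Dset T m).Nonempty :=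
      ⟨_, ⟨μ0, hμ0, rfl⟩⟩
    have hdiff : ∀ x ∈ (fun μ : Measure ℝ => ∫ u, u ^ (T + 1) ∂μ) '' Dset T m,
        ∀ y ∈ (fun μ : Measure ℝ => ∫ u, u ^ (T + 1) ∂μ) '' Dset T m,
        x - y ≤ 1 / 4 ^ T := by
      rintro _ ⟨μ, hμ, rfl⟩ _ ⟨ν, hν, rfl⟩
      have hmom : ∀ t : ℕ, t ≤ T → ∫ u, u ^ t ∂μ = ∫ u, u ^ t ∂ν := by
        intro t ht
        have h1 := hμ.2.2 ⟨t, by omega⟩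
        have h2 := hν.2.2 ⟨t, by omega⟩
        exact h1.symm.trans h2
      have h := key T μ ν hμ.1 hν.1 hμ.2.1 hν.2.1 hmom
      exact le_trans (le_abs_self _) h
    have hub : qup T m ≤ qlow T m + 1 / 4 ^ T := by
      refine csSup_le hne ?_
      intro x hx
      have hlb : x - 1 / 4 ^ T ≤ qlow T m :=
        le_csInf hne fun y hy => by linarith [hdiff x hx y hy]
      linarith
    linarith
end

section
/- Let α ∈ (0,1). For every b ∈ ℝ there exists a unique q ≥ 0 such that Φ(q−b) − Φ(−q−b) = 1−α; denote it q_α(b), the (1−α)-quantile of |Z+b| for Z standard normal. Then q_α is symmetric, i.e. q_α(−b) = q_α(b) for all b ∈ ℝ, and q_α is strictly increasing on [0,∞): 0 ≤ b < b' implies q_α(b) < q_α(b'). -/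
/-!
Write `F(b, q) = Φ(q - b) - Φ(-q - b) = Φ(q - b) + Φ(q + b) - 1`, using `Φ(-x) = 1 - Φ(x)`.
This form is even in `b`, and in `q` it increases strictly and continuously from `F(b, 0) = 0`
to `1`, so `q_α(b)` exists, is unique and is even in `b`. For `q > 0` the `b`-derivative
`φ(q + b) - φ(q - b)` is negative when `b > 0`, since `|q - b| < q + b` and the density `φ`
decreases in `|x|`. So `F(·, q)` decreases strictly on `[0, ∞)`, and because `F(b', ·)`
increases, `q_α(b) < q_α(b')` whenever `0 ≤ b < b'`.
-/

open MeasureTheory ProbabilityTheory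

/-- The standard normal cumulative distribution function `Φ`. -/
noncomputable def Phi (x : ℝ) : ℝ := (gaussianReal 0 1 (Set.Iic x)).toReal

open Real Set Filter Topology

namespace ProbabilityTheory

lemma continuous_gaussianPDFReal (μ : ℝ) (v : NNReal) : Continuous (gaussianPDFReal μ v) := by
  rw [gaussianPDFReal_def]
  fun_prop

lemma gaussianPDFReal_zero_neg (v : NNReal) (x : ℝ) :
    gaussianPDFReal 0 v (-x) = gaussianPDFReal 0 v x := by
  simp [gaussianPDFReal_def]

lemma gaussianPDFReal_lt_of_abs_sub_lt {μ : ℝ} {v : NNReal} (hv : v ≠ 0) {x y : ℝ}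
    (h : |x - μ| < |y - μ|) : gaussianPDFReal μ v y < gaussianPDFReal μ v x := by
  have hv₀ : (0 : ℝ) < v := by positivity
  simp only [gaussianPDFReal_def]
  gcongr ?_ * rexp (?_ / _)
  exact neg_lt_neg (sq_lt_sq.2 h)

end ProbabilityTheory

local notation "φ" => gaussianPDFReal 0 1

lemma Phi_eq_integral (x : ℝ) : Phi x = ∫ t in Iic x, φ t := by
  rw [Phi, gaussianReal_apply_eq_integral 0 one_ne_zero]
  exact ENNReal.toReal_ofReal (setIntegral_nonneg measurableSet_Iic fun t _ ↦
    gaussianPDFReal_nonneg 0 1 t)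

lemma Phi_sub_Phi (x y : ℝ) : Phi y - Phi x = ∫ t in x..y, φ t := by
  rw [Phi_eq_integral, Phi_eq_integral]
  exact intervalIntegral.integral_Iic_sub_Iic (integrable_gaussianPDFReal 0 1).integrableOn
    (integrable_gaussianPDFReal 0 1).integrableOn

lemma hasDerivAt_Phi (x : ℝ) : HasDerivAt Phi (φ x) x := by
  have hPhi : Phi = fun y ↦ Phi 0 + ∫ t in 0..y, φ t := by
    ext y
    rw [← Phi_sub_Phi]
    ring
  have hcont := continuous_gaussianPDFReal 0 1
  rw [hPhi]
  exact (intervalIntegral.integral_hasDerivAt_right (hcont.intervalIntegrable _ _)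
    hcont.aestronglyMeasurable.stronglyMeasurableAtFilter hcont.continuousAt).const_add _

@[fun_prop]
lemma continuous_Phi : Continuous Phi :=
  continuous_iff_continuousAt.2 fun x ↦ (hasDerivAt_Phi x).continuousAt

lemma Phi_strictMono : StrictMono Phi :=
  strictMono_of_hasDerivAt_pos hasDerivAt_Phi fun x ↦ gaussianPDFReal_pos 0 1 x one_ne_zero

lemma tendsto_Phi_atTop : Tendsto Phi atTop (𝓝 1) :=
  (tendsto_cdf_atTop (gaussianReal 0 1)).congr fun x ↦ cdf_eq_real _ x

lemma tendsto_Phi_atBot : Tendsto Phi atBot (𝓝 0) :=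
  (tendsto_cdf_atBot (gaussianReal 0 1)).congr fun x ↦ cdf_eq_real _ x

lemma Phi_neg (x : ℝ) : Phi (-x) = 1 - Phi x := by
  set f : ℝ → ℝ := fun y ↦ Phi y + Phi (-y)
  have hf : ∀ y, HasDerivAt f 0 y := fun y ↦
    ((hasDerivAt_Phi y).add ((hasDerivAt_Phi (-y)).comp y (hasDerivAt_neg' y))).congr_deriv
      (by rw [gaussianPDFReal_zero_neg]; ring)
  have hconst : ∀ y, f y = f x := fun y ↦
    is_const_of_deriv_eq_zero (fun y ↦ (hf y).differentiableAt) (fun y ↦ (hf y).deriv) y x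
  have hlim : Tendsto f atTop (𝓝 1) := by
    simpa using tendsto_Phi_atTop.add (tendsto_Phi_atBot.comp tendsto_neg_atTop_atBot)
  have := tendsto_nhds_unique (hlim.congr hconst) tendsto_const_nhds
  simp only [f] at this
  linarith

/-- `P(|Z + b| ≤ q)` for `q ≥ 0`, `Z` standard normal. -/
noncomputable def cdfAbsNormal (b q : ℝ) : ℝ := Phi (q - b) - Phi (-q - b)

lemma cdfAbsNormal_eq (b q : ℝ) : cdfAbsNormal b q = Phi (q - b) + Phi (q + b) - 1 := by
  rw [cdfAbsNormal, show -q - b = -(q + b) by ring, Phi_neg]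
  ring

lemma cdfAbsNormal_neg (b q : ℝ) : cdfAbsNormal (-b) q = cdfAbsNormal b q := by
  rw [cdfAbsNormal_eq, cdfAbsNormal_eq, sub_neg_eq_add, ← sub_eq_add_neg, add_comm (Phi _)]

lemma cdfAbsNormal_zero (b : ℝ) : cdfAbsNormal b 0 = 0 := by
  simp [cdfAbsNormal]

lemma strictMono_cdfAbsNormal (b : ℝ) : StrictMono (cdfAbsNormal b) := fun q q' h ↦ by
  have h₁ : Phi (q - b) < Phi (q' - b) := Phi_strictMono (by linarith)
  have h₂ : Phi (-q' - b) < Phi (-q - b) := Phi_strictMono (by linarith)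
  rw [cdfAbsNormal, cdfAbsNormal]
  linarith

lemma continuous_cdfAbsNormal (b : ℝ) : Continuous (cdfAbsNormal b) := by
  unfold cdfAbsNormal
  fun_prop

lemma tendsto_cdfAbsNormal_atTop (b : ℝ) : Tendsto (cdfAbsNormal b) atTop (𝓝 1) := by
  simp_rw [funext (cdfAbsNormal_eq b)]
  simpa [sub_eq_add_neg] using
    ((tendsto_Phi_atTop.comp (tendsto_atTop_add_const_right _ (-b) tendsto_id)).add
      (tendsto_Phi_atTop.comp (tendsto_atTop_add_const_right _ b tendsto_id))).sub_const 1

lemma existsUnique_cdfAbsNormal_eq {p : ℝ} (hp₀ : 0 ≤ p) (hp₁ : p < 1) (b : ℝ) :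
    ∃! q, 0 ≤ q ∧ cdfAbsNormal b q = p := by
  obtain ⟨q₀, hq₀, hpq₀⟩ :=
    ((eventually_ge_atTop 0).and ((tendsto_cdfAbsNormal_atTop b).eventually_const_lt hp₁)).exists
  obtain ⟨q, hq, hqp⟩ := intermediate_value_Icc hq₀ (continuous_cdfAbsNormal b).continuousOn
    ⟨(cdfAbsNormal_zero b).trans_le hp₀, hpq₀.le⟩
  exact ⟨q, ⟨hq.1, hqp⟩, fun q' hq' ↦
    (strictMono_cdfAbsNormal b).injective (hq'.2.trans hqp.symm)⟩

lemma cdfAbsNormal_strictAntiOn {q : ℝ} (hq : 0 < q) :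
    StrictAntiOn (fun b ↦ cdfAbsNormal b q) (Ici 0) := by
  simp_rw [cdfAbsNormal_eq]
  have hderiv (b : ℝ) :
      HasDerivAt (fun b ↦ Phi (q - b) + Phi (q + b) - 1) (φ (q + b) - φ (q - b)) b :=
    ((((hasDerivAt_Phi (q - b)).comp b ((hasDerivAt_id' b).const_sub q)).add
      ((hasDerivAt_Phi (q + b)).comp b ((hasDerivAt_id' b).const_add q))).sub_const 1).congr_deriv
      (by ring)
  refine strictAntiOn_of_hasDerivWithinAt_neg (convex_Ici 0) (by fun_prop)
    (fun b _ ↦ (hderiv b).hasDerivWithinAt) fun b hb ↦ ?_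
  rw [interior_Ici, mem_Ioi] at hb
  have hdist : |q - b - 0| < |q + b - 0| := by
    rw [sub_zero, sub_zero, abs_of_pos (by linarith : 0 < q + b)]
    exact abs_sub_lt_iff.2 ⟨by linarith, by linarith⟩
  exact sub_neg.2 (gaussianPDFReal_lt_of_abs_sub_lt one_ne_zero hdist)

/-- For `α ∈ (0,1)` and every `b ∈ ℝ` there is a unique `q ≥ 0` with
`Φ(q-b) - Φ(-q-b) = 1-α` (the `(1-α)`-quantile `q_α(b)` of `|Z+b|`, `Z` standard normal);
moreover `b ↦ q_α(b)` is symmetric and strictly increasing on `[0,∞)`. -/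
theorem quantile_abs_normal_exists_symm_mono (α : ℝ) (hα : α ∈ Set.Ioo (0 : ℝ) 1) :
    (∀ b : ℝ, ∃! q : ℝ, 0 ≤ q ∧ Phi (q - b) - Phi (-q - b) = 1 - α) ∧
    ∀ qa : ℝ → ℝ,
      (∀ b : ℝ, 0 ≤ qa b ∧ Phi (qa b - b) - Phi (-qa b - b) = 1 - α) →
      (∀ b : ℝ, qa (-b) = qa b) ∧
      (∀ b b' : ℝ, 0 ≤ b → b < b' → qa b < qa b') := by
  have hlevel : 0 < 1 - α := sub_pos.2 hα.2
  have hunique (b : ℝ) : ∃! q, 0 ≤ q ∧ cdfAbsNormal b q = 1 - α :=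
    existsUnique_cdfAbsNormal_eq hlevel.le (by linarith [hα.1]) b
  refine ⟨hunique, fun qa hqa ↦ ⟨fun b ↦ ?_, fun b b' hb hbb' ↦ ?_⟩⟩
  · exact (hunique b).unique
      ⟨(hqa (-b)).1, (cdfAbsNormal_neg b _).symm.trans (hqa (-b)).2⟩ (hqa b)
  · have hqa_pos : 0 < qa b := (strictMono_cdfAbsNormal b).lt_iff_lt.1 <| by
      rw [cdfAbsNormal_zero]
      exact hlevel.trans_eq (hqa b).2.symm
    refine (strictMono_cdfAbsNormal b').lt_iff_lt.1 ?_
    calc cdfAbsNormal b' (qa b)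
        < cdfAbsNormal b (qa b) := cdfAbsNormal_strictAntiOn hqa_pos hb (hb.trans hbb'.le) hbb'
      _ = 1 - α := (hqa b).2
      _ = cdfAbsNormal b' (qa b') := (hqa b').2.symm
end

section
/- Let α ∈ (0,1), B ≥ 0 and b ∈ ℝ with |b| ≤ B. If Z is a Gaussian random variable with mean b and variance 1, then P(|Z| ≤ q_α(B)) ≥ 1−α. -/
open MeasureTheory ProbabilityTheory

namespace CoverageAux

noncomputable def f : ℝ → ℝ := gaussianPDFReal 0 1

lemma f_nonneg (x : ℝ) : 0 ≤ f x := gaussianPDFReal_nonneg 0 1 x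

lemma f_integrable : MeasureTheory.Integrable f := integrable_gaussianPDFReal 0 1

lemma f_intInt (a b : ℝ) : IntervalIntegrable f MeasureTheory.volume a b :=
  f_integrable.intervalIntegrable

lemma f_even (x : ℝ) : f (-x) = f x := by
  simp [f, gaussianPDFReal]

lemma f_mono {x y : ℝ} (h : |y| ≤ |x|) : f x ≤ f y := by
  simp only [f, gaussianPDFReal, sub_zero]
  have hsq : y ^ 2 ≤ x ^ 2 := by
    rw [← sq_abs y, ← sq_abs x]
    exact pow_le_pow_left₀ (abs_nonneg _) h 2
  have hexp : Real.exp (-x ^ 2 / (2 * (1:NNReal))) ≤ Real.exp (-y ^ 2 / (2 * (1:NNReal))) := by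
    apply Real.exp_le_exp.mpr
    have : ((1:NNReal):ℝ) = 1 := rfl
    rw [this]
    nlinarith
  exact mul_le_mul_of_nonneg_left hexp (by positivity)

lemma Phi_eq (x : ℝ) : Phi x = ∫ t in Set.Iic x, f t := by
  rw [Phi, gaussianReal_apply_eq_integral 0 one_ne_zero,
    ENNReal.toReal_ofReal (setIntegral_nonneg measurableSet_Iic
      fun t _ => gaussianPDFReal_nonneg 0 1 t)]
  rfl

lemma Phi_sub (x y : ℝ) : Phi y - Phi x = ∫ t in x..y, f t := by
  rw [Phi_eq, Phi_eq]
  exact intervalIntegral.integral_Iic_sub_Iic f_integrable.integrableOn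
    f_integrable.integrableOn

/-- Key monotonicity: shifting the window of length `2q` further from the center
decreases the Gaussian mass. -/
lemma key {q b B : ℝ} (hq : 0 ≤ q) (hb0 : 0 ≤ b) (hbB : b ≤ B) :
    (∫ x in (-q - B)..(q - B), f x) ≤ ∫ x in (-q - b)..(q - b), f x := by
  have h1 : (∫ x in (-q - B)..(q - b), f x)
      = (∫ x in (-q - B)..(q - B), f x) + ∫ x in (q - B)..(q - b), f x :=
    (intervalIntegral.integral_add_adjacent_intervals (f_intInt _ _) (f_intInt _ _)).symm
  have h2 : (∫ x in (-q - B)..(q - b), f x)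
      = (∫ x in (-q - B)..(-q - b), f x) + ∫ x in (-q - b)..(q - b), f x :=
    (intervalIntegral.integral_add_adjacent_intervals (f_intInt _ _) (f_intInt _ _)).symm
  have hleft : (∫ x in (-q - B)..(-q - b), f x) = ∫ x in (q + b)..(q + B), f x := by
    have h := intervalIntegral.integral_comp_neg (a := q + b) (b := q + B) f
    simp_rw [f_even] at h
    rw [show -q - B = -(q + B) by ring, show -q - b = -(q + b) by ring, ← h]
  have hright : (∫ x in (q - B)..(q - b), f x)
      = ∫ x in (q + b)..(q + B), f (2 * q - x) := by
    rw [intervalIntegral.integral_comp_sub_left f (2 * q)]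
    congr 1 <;> ring
  have hcomp : (∫ x in (q + b)..(q + B), f x)
      ≤ ∫ x in (q + b)..(q + B), f (2 * q - x) := by
    apply intervalIntegral.integral_mono_on (by linarith) (f_intInt _ _)
    · have h := (f_intInt (q - b) (q - B)).comp_sub_left (2 * q)
      rw [show 2 * q - (q - b) = q + b by ring, show 2 * q - (q - B) = q + B by ring] at h
      exact h
    · intro x hx
      apply f_mono
      have hx1 : q + b ≤ x := hx.1
      have hx2 : 0 ≤ x := by linarith
      rw [abs_of_nonneg hx2, abs_le]
      constructor <;> linarith
  linarith [h1, h2, hleft ▸ hright ▸ hcomp]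

end CoverageAux

open CoverageAux in
/-- Coverage inequality: for `α ∈ (0,1)`, `B ≥ 0`, `|b| ≤ B`, and `Z` Gaussian with mean `b`
and variance `1`, one has `P(|Z| ≤ q_α(B)) ≥ 1 - α`, where `q_α(B)` is the `(1-α)`-quantile
of `|Z₀ + B|` for `Z₀` standard normal. -/
theorem coverage_bias_aware (α : ℝ) (hα : α ∈ Set.Ioo (0 : ℝ) 1)
    (B b : ℝ) (hB : 0 ≤ B) (hb : |b| ≤ B)
    (qB : ℝ) (hqB : 0 ≤ qB ∧ Phi (qB - B) - Phi (-qB - B) = 1 - α) :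
    1 - α ≤ (gaussianReal b 1 {x : ℝ | |x| ≤ qB}).toReal := by
  obtain ⟨hq, hcov⟩ := hqB
  -- rewrite the set as Icc
  have hset : {x : ℝ | |x| ≤ qB} = Set.Icc (-qB) qB := by
    ext x; simp [abs_le]
  -- express the probability as an interval integral of the standard pdf
  have hprob : (gaussianReal b 1 {x : ℝ | |x| ≤ qB}).toReal
      = ∫ x in (-qB - b)..(qB - b), f x := by
    rw [hset, gaussianReal_apply_eq_integral b one_ne_zero,
      ENNReal.toReal_ofReal (setIntegral_nonneg measurableSet_Icc
        fun t _ => gaussianPDFReal_nonneg b 1 t)]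
    rw [MeasureTheory.integral_Icc_eq_integral_Ioc,
      ← intervalIntegral.integral_of_le (by linarith)]
    have : ∀ x : ℝ, gaussianPDFReal b 1 x = f (x - b) := by
      intro x
      rw [f, gaussianPDFReal_sub x b, zero_add]
    simp_rw [this]
    rw [intervalIntegral.integral_comp_sub_right f b]
  rw [hprob, ← hcov, Phi_sub]
  -- reduce to the case `0 ≤ b` using evenness
  rcases le_or_gt 0 b with hb0 | hb0
  · exact key hq hb0 (abs_le.mp hb).2
  · have heq : (∫ x in (-qB - b)..(qB - b), f x)
        = ∫ x in (-qB - (-b))..(qB - (-b)), f x := by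
      have h := intervalIntegral.integral_comp_neg (a := -qB + b) (b := qB + b) f
      simp_rw [f_even] at h
      rw [show -qB - b = -(qB + b) by ring, show qB - b = -(-qB + b) by ring]
      rw [← h]
      congr 1 <;> ring
    rw [heq]
    exact key hq (by linarith) (by
      have := (abs_le.mp hb).1; linarith)
end
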